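/- For all a ≥ 1, the Toads and Frogs position T^a □ (TF)^b T F^c with b ≥ 0 and c ≥ 2, possibly preceded by any {T,F}-string L ending in F and followed by any {T,F}-string R starting with T, has game value { a−1 | O^b( L T^a F (TF)^b T □ F^{c−1} R ) }, where O(x) = {0 | x} and O^b is b-fold iteration of O. -/

import Mathlib

universe u

namespace SetTheory

/-- Pre-games, as in the (since removed) Mathlib `SetTheory.PGame`. -/
inductive PGame : Type (u + 1)
  | mk : ∀ α β : Type u, (α → PGame) → (β → PGame) → PGame

namespace PGame

/-- The pair `(x ≤ y, x ⧏ y)`, as in the old Mathlib definition. -/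
noncomputable def leLf (x : PGame.{u}) : PGame.{u} → Prop × Prop :=
  PGame.rec (motive := fun _ => PGame.{u} → Prop × Prop)
    (fun xl xr xL xR IHxL IHxR y =>
      PGame.rec (motive := fun _ => Prop × Prop)
        (fun yl yr yL yR IHyL IHyR =>
          ((∀ i, (IHxL i (mk yl yr yL yR)).2) ∧ ∀ j, (IHyR j).2,
            (∃ i, (IHyL i).1) ∨ ∃ j, (IHxR j (mk yl yr yL yR)).1)) y) x

instance : LE PGame.{u} :=
  ⟨fun x y => (leLf x y).1⟩

/-- Equivalence of pre-games: `x ≤ y ∧ y ≤ x`. -/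
def Equiv (x y : PGame.{u}) : Prop :=
  x ≤ y ∧ y ≤ x

instance : HasEquiv PGame.{u} :=
  ⟨Equiv⟩

instance : Zero PGame.{u} :=
  ⟨⟨PEmpty, PEmpty, PEmpty.elim, PEmpty.elim⟩⟩

/-- Negation of a pre-game. -/
def neg : PGame.{u} → PGame.{u}
  | mk l r L R => mk r l (fun i => neg (R i)) (fun i => neg (L i))

instance : Neg PGame.{u} :=
  ⟨neg⟩

end PGame

end SetTheory

open SetTheory

inductive Cell : Type
  | T | F | E
deriving DecidableEq

/-- Positions reachable from `l` by a single Toad (Left) move: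
a Toad steps right into an empty square, or jumps over one adjacent Frog
into the empty square beyond. -/
def toadMoves : List Cell → List (List Cell)
  | [] => []
  | c :: rest =>
    (match c, rest with
     | Cell.T, Cell.E :: r => [Cell.E :: Cell.T :: r]
     | Cell.T, Cell.F :: Cell.E :: r => [Cell.E :: Cell.F :: Cell.T :: r]
     | _, _ => []) ++ (toadMoves rest).map (c :: ·)

/-- Positions reachable from `l` by a single Frog (Right) move. -/
def frogMoves : List Cell → List (List Cell)
  | [] => []
  | c :: rest =>
    (match c, rest with
     | Cell.E, Cell.F :: r => [Cell.F :: Cell.E :: r]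
     | Cell.E, Cell.T :: Cell.F :: r => [Cell.F :: Cell.T :: Cell.E :: r]
     | _, _ => []) ++ (frogMoves rest).map (c :: ·)

/-- A weight which strictly decreases with every legal move: each Toad
contributes the number of squares strictly to its right, each Frog the number
of squares strictly to its left. -/
def wt : List Cell → ℕ
  | [] => 0
  | c :: rest =>
    (if c = Cell.T then rest.length else 0) + rest.countP (· = Cell.F) + wt rest

/-- Game tree with fuel; since `wt` strictly decreases along moves and
positions of weight `0` have no moves, `gameAux n l` is the true game
tree of `l` whenever `wt l ≤ n`. -/
def gameAux : ℕ → List Cell → PGame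
  | 0, _ => 0
  | n + 1, l =>
    PGame.mk {m // m ∈ toadMoves l} {m // m ∈ frogMoves l}
      (fun m => gameAux n m.1) (fun m => gameAux n m.1)

/-- The game (PGame) associated to a Toads and Frogs position. -/
def tfGame (l : List Cell) : PGame := gameAux (wt l + 1) l

/-- The game `{x | y}` with a single Left option `x` and single Right option `y`. -/
def gmk (x y : PGame) : PGame :=
  PGame.mk PUnit PUnit (fun _ => x) (fun _ => y)

/-- The canonical game of a natural number. -/
def natGame : ℕ → PGame
  | 0 => 0
  | n + 1 => PGame.mk PUnit PEmpty (fun _ => natGame n) (fun x => x.elim)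

/-- The canonical game of an integer. -/
def intGame : ℤ → PGame
  | Int.ofNat n => natGame n
  | Int.negSucc n => -natGame (n + 1)

/-- `(TF)^b` : the block `TF` repeated `b` times. -/
def tfBlock (b : ℕ) : List Cell := (List.replicate b [Cell.T, Cell.F]).flatten


/-!
Only the squares next to the single gap matter. Left's unique move slides the last toad of `T^a`
into the gap. From then on the gap is followed by `TT`, so no frog can move, and Left has `a - 1`
free toad slides; once the gap is preceded by `F`, Left's only possible move is a toad jump, which
Right reverses by sliding that frog back, so such a position is worth `0`. Right's unique move is
the jump `□TF → FT□`, which pushes the gap one `TF` block to the right; every position on the way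
has Left option `0` (by the previous remark) and the next position as Right option, which gives
the `b` applications of `O = {0 | ·}`.
-/

namespace SetTheory.PGame

def LF (x y : PGame.{u}) : Prop := (leLf x y).2

theorem mk_le_mk {xl xr yl yr : Type u} {xL : xl → PGame.{u}} {xR : xr → PGame.{u}}
    {yL : yl → PGame.{u}} {yR : yr → PGame.{u}} :
    mk xl xr xL xR ≤ mk yl yr yL yR ↔
      (∀ i, LF (xL i) (mk yl yr yL yR)) ∧ ∀ j, LF (mk xl xr xL xR) (yR j) :=
  Iff.rfl

theorem lf_mk_of_le_moveLeft {x : PGame.{u}} {yl yr : Type u} {yL : yl → PGame.{u}}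
    {yR : yr → PGame.{u}} (i : yl) (h : x ≤ yL i) : LF x (mk yl yr yL yR) := by
  cases x
  exact Or.inl ⟨i, h⟩

theorem mk_lf_of_moveRight_le {y : PGame.{u}} {xl xr : Type u} {xL : xl → PGame.{u}}
    {xR : xr → PGame.{u}} (j : xr) (h : xR j ≤ y) : LF (mk xl xr xL xR) y := by
  cases y
  exact Or.inr ⟨j, h⟩

protected theorem le_refl : ∀ x : PGame.{u}, x ≤ x
  | mk _ _ xL xR => ⟨fun i => lf_mk_of_le_moveLeft i (PGame.le_refl (xL i)),
      fun j => mk_lf_of_moveRight_le j (PGame.le_refl (xR j))⟩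

protected theorem equiv_refl (x : PGame.{u}) : x ≈ x := ⟨x.le_refl, x.le_refl⟩

theorem mk_equiv_mk {xl xr yl yr : Type u} {xL : xl → PGame.{u}} {xR : xr → PGame.{u}}
    {yL : yl → PGame.{u}} {yR : yr → PGame.{u}}
    (hL₁ : ∀ i, ∃ j, xL i ≈ yL j) (hL₂ : ∀ j, ∃ i, xL i ≈ yL j)
    (hR₁ : ∀ i, ∃ j, xR i ≈ yR j) (hR₂ : ∀ j, ∃ i, xR i ≈ yR j) :
    mk xl xr xL xR ≈ mk yl yr yL yR := by
  constructor
  · refine mk_le_mk.2 ⟨fun i => ?_, fun j => ?_⟩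
    · obtain ⟨j, h⟩ := hL₁ i
      exact lf_mk_of_le_moveLeft j h.1
    · obtain ⟨i, h⟩ := hR₂ j
      exact mk_lf_of_moveRight_le i h.1
  · refine mk_le_mk.2 ⟨fun j => ?_, fun i => ?_⟩
    · obtain ⟨i, h⟩ := hL₂ j
      exact lf_mk_of_le_moveLeft i h.2
    · obtain ⟨j, h⟩ := hR₁ i
      exact mk_lf_of_moveRight_le j h.2

theorem mk_equiv_zero {xl xr : Type u} [IsEmpty xr] {xL : xl → PGame.{u}}
    {xR : xr → PGame.{u}} (h : ∀ i, LF (xL i) 0) : mk xl xr xL xR ≈ 0 :=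
  ⟨mk_le_mk.2 ⟨h, fun j => PEmpty.elim j⟩,
    mk_le_mk.2 ⟨fun i => PEmpty.elim i, isEmptyElim⟩⟩

end SetTheory.PGame

open SetTheory.PGame

theorem toadMoves_eq_nil {l : List Cell} (hl : Cell.E ∉ l) : toadMoves l = [] := by
  induction l with
  | nil => rfl
  | cons c l ih =>
    simp only [List.mem_cons, not_or] at hl
    rw [toadMoves]
    · simp [ih hl.2]
    all_goals rintro r - rfl; simp at hl

theorem frogMoves_eq_nil {l : List Cell} (hl : Cell.E ∉ l) : frogMoves l = [] := by
  induction l with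
  | nil => rfl
  | cons c l ih =>
    simp only [List.mem_cons, not_or] at hl
    rw [frogMoves]
    · simp [ih hl.2]
    all_goals rintro r rfl -; simp at hl

theorem frogMoves_append {X : List Cell} (Z : List Cell) (hX : Cell.E ∉ X) :
    frogMoves (X ++ Z) = (frogMoves Z).map (X ++ ·) := by
  induction X with
  | nil => simp
  | cons c X ih =>
    simp only [List.mem_cons, not_or] at hX
    rw [List.cons_append, frogMoves, ih hX.2]
    · simp [Function.comp_def]
    all_goals rintro r rfl -; exact hX.1 rfl

theorem append_ne_E_cons {X Z : List Cell} (hX : Cell.E ∉ X) (hZ : ∀ r, Z ≠ Cell.E :: r)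
    (r : List Cell) :
    X ++ Z ≠ Cell.E :: r := by
  cases X with
  | nil => exact hZ r
  | cons x X => rintro ⟨⟩; simp at hX

theorem toadMoves_append {X Z : List Cell} (hX : Cell.E ∉ X) (hZ₁ : ∀ r, Z ≠ Cell.E :: r)
    (hZ₂ : ∀ r, Z ≠ Cell.F :: Cell.E :: r) :
    toadMoves (X ++ Z) = (toadMoves Z).map (X ++ ·) := by
  induction X with
  | nil => simp
  | cons c X ih =>
    simp only [List.mem_cons, not_or] at hX
    rw [List.cons_append, toadMoves, ih hX.2]
    · simp [Function.comp_def]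
    · intro r _ h; exact append_ne_E_cons hX.2 hZ₁ r h
    · intro r _ h
      cases X with
      | nil => exact hZ₂ r h
      | cons x X =>
        simp only [List.cons_append, List.cons.injEq] at h
        exact append_ne_E_cons (List.not_mem_of_not_mem_cons hX.2) hZ₁ r h.2

section Moves

variable {X Y : List Cell}

theorem toadMoves_slide (hX : Cell.E ∉ X) (hY : Cell.E ∉ Y) :
    toadMoves (X ++ Cell.T :: Cell.E :: Y) = [X ++ Cell.E :: Cell.T :: Y] := by
  rw [toadMoves_append hX (by simp) (by simp)]
  simp [toadMoves, toadMoves_eq_nil hY]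

theorem toadMoves_jump (hX : Cell.E ∉ X) (hY : Cell.E ∉ Y) :
    toadMoves (X ++ Cell.T :: Cell.F :: Cell.E :: Y) =
      [X ++ Cell.E :: Cell.F :: Cell.T :: Y] := by
  rw [toadMoves_append hX (by simp) (by simp)]
  simp [toadMoves, toadMoves_eq_nil hY]

theorem toadMoves_E_cons (hY : Cell.E ∉ Y) : toadMoves (Cell.E :: Y) = [] := by
  simp [toadMoves, toadMoves_eq_nil hY]

theorem toadMoves_F_E (hY : Cell.E ∉ Y) : toadMoves (Cell.F :: Cell.E :: Y) = [] := by
  simp [toadMoves, toadMoves_eq_nil hY]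

theorem toadMoves_F_F_E (hX : Cell.E ∉ X) (hY : Cell.E ∉ Y) :
    toadMoves (X ++ Cell.F :: Cell.F :: Cell.E :: Y) = [] := by
  rw [toadMoves_append hX (by simp) (by simp)]
  simp [toadMoves, toadMoves_eq_nil hY]

theorem frogMoves_slide (hX : Cell.E ∉ X) (hY : Cell.E ∉ Y) :
    frogMoves (X ++ Cell.E :: Cell.F :: Y) = [X ++ Cell.F :: Cell.E :: Y] := by
  rw [frogMoves_append _ hX]
  simp [frogMoves, frogMoves_eq_nil hY]

theorem frogMoves_jump (hX : Cell.E ∉ X) (hY : Cell.E ∉ Y) :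
    frogMoves (X ++ Cell.E :: Cell.T :: Cell.F :: Y) =
      [X ++ Cell.F :: Cell.T :: Cell.E :: Y] := by
  rw [frogMoves_append _ hX]
  simp [frogMoves, frogMoves_eq_nil hY]

theorem frogMoves_E_T_T (hX : Cell.E ∉ X) (hY : Cell.E ∉ Y) :
    frogMoves (X ++ Cell.E :: Cell.T :: Cell.T :: Y) = [] := by
  rw [frogMoves_append _ hX]
  simp [frogMoves, frogMoves_eq_nil hY]

end Moves

theorem wt_lt_and_length_eq_and_countP_eq_of_mem_toadMoves {l m : List Cell}
    (h : m ∈ toadMoves l) :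
    wt m < wt l ∧ m.length = l.length ∧ m.countP (· = Cell.F) = l.countP (· = Cell.F) := by
  induction l generalizing m with
  | nil => simp [toadMoves] at h
  | cons c l ih =>
    rw [toadMoves.eq_def] at h
    rcases List.mem_append.1 h with h | h
    · split at h <;> simp only [List.mem_singleton, List.not_mem_nil] at h <;> subst h <;>
        simp +arith [wt]
    · obtain ⟨m, hm, rfl⟩ := List.mem_map.1 h
      obtain ⟨h₁, h₂, h₃⟩ := ih hm
      simp only [wt, List.length_cons, List.countP_cons, h₂, h₃, and_true]
      exact Nat.add_lt_add_left h₁ _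

theorem wt_lt_and_length_eq_and_countP_eq_of_mem_frogMoves {l m : List Cell}
    (h : m ∈ frogMoves l) :
    wt m < wt l ∧ m.length = l.length ∧ m.countP (· = Cell.F) = l.countP (· = Cell.F) := by
  induction l generalizing m with
  | nil => simp [frogMoves] at h
  | cons c l ih =>
    rw [frogMoves.eq_def] at h
    rcases List.mem_append.1 h with h | h
    · split at h <;> simp only [List.mem_singleton, List.not_mem_nil] at h <;> subst h <;>
        simp +arith [wt]
    · obtain ⟨m, hm, rfl⟩ := List.mem_map.1 h
      obtain ⟨h₁, h₂, h₃⟩ := ih hm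
      simp only [wt, List.length_cons, List.countP_cons, h₂, h₃, and_true]
      exact Nat.add_lt_add_left h₁ _

theorem gameAux_eq_tfGame : ∀ {n : ℕ} {l : List Cell}, wt l < n → gameAux n l = tfGame l
  | n + 1, l, hl => by
    rw [tfGame, gameAux, gameAux]
    congr 1 <;> funext m
    · have hm := (wt_lt_and_length_eq_and_countP_eq_of_mem_toadMoves m.2).1
      rw [gameAux_eq_tfGame (by omega), gameAux_eq_tfGame hm]
    · have hm := (wt_lt_and_length_eq_and_countP_eq_of_mem_frogMoves m.2).1
      rw [gameAux_eq_tfGame (by omega), gameAux_eq_tfGame hm]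

theorem tfGame_eq_mk (l : List Cell) : tfGame l =
    PGame.mk {m // m ∈ toadMoves l} {m // m ∈ frogMoves l}
      (fun m => tfGame m.1) (fun m => tfGame m.1) := by
  rw [tfGame, gameAux]
  congr 1 <;> funext m
  · exact gameAux_eq_tfGame (wt_lt_and_length_eq_and_countP_eq_of_mem_toadMoves m.2).1
  · exact gameAux_eq_tfGame (wt_lt_and_length_eq_and_countP_eq_of_mem_frogMoves m.2).1

section Values

variable {l x y : List Cell}

theorem tfGame_equiv_gmk {G H : PGame} (ht : toadMoves l = [x]) (hf : frogMoves l = [y])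
    (hx : tfGame x ≈ G) (hy : tfGame y ≈ H) : tfGame l ≈ gmk G H := by
  rw [tfGame_eq_mk]
  refine mk_equiv_mk (fun ⟨m, hm⟩ => ?_) (fun _ => ⟨⟨x, by simp [ht]⟩, hx⟩)
    (fun ⟨m, hm⟩ => ?_) (fun _ => ⟨⟨y, by simp [hf]⟩, hy⟩)
  · rw [ht, List.mem_singleton] at hm
    exact ⟨⟨⟩, hm ▸ hx⟩
  · rw [hf, List.mem_singleton] at hm
    exact ⟨⟨⟩, hm ▸ hy⟩

theorem tfGame_equiv_natGame_succ {n : ℕ} (ht : toadMoves l = [x]) (hf : frogMoves l = [])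
    (hx : tfGame x ≈ natGame n) : tfGame l ≈ natGame (n + 1) := by
  rw [tfGame_eq_mk, natGame]
  refine mk_equiv_mk (fun ⟨m, hm⟩ => ?_) (fun _ => ⟨⟨x, by simp [ht]⟩, hx⟩)
    (fun ⟨m, hm⟩ => by simp [hf] at hm) (fun j => j.elim)
  rw [ht, List.mem_singleton] at hm
  exact ⟨⟨⟩, hm ▸ hx⟩

theorem tfGame_equiv_zero (hf : frogMoves l = []) (ht : ∀ x ∈ toadMoves l, LF (tfGame x) 0) :
    tfGame l ≈ 0 := by
  rw [tfGame_eq_mk]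
  have : IsEmpty {m // m ∈ frogMoves l} := ⟨fun ⟨m, hm⟩ => by simp [hf] at hm⟩
  exact mk_equiv_zero fun m => ht m.1 m.2

theorem tfGame_lf_of_mem_frogMoves {G : PGame} (hy : y ∈ frogMoves x) (h : tfGame y ≤ G) :
    LF (tfGame x) G := by
  rw [tfGame_eq_mk]
  exact mk_lf_of_moveRight_le ⟨y, hy⟩ h

end Values

theorem tfBlock_succ (b : ℕ) : tfBlock (b + 1) = Cell.T :: Cell.F :: tfBlock b := by
  simp [tfBlock, List.replicate_succ]

theorem E_not_mem_tfBlock (b : ℕ) : Cell.E ∉ tfBlock b := by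
  simp [tfBlock, List.mem_flatten, List.mem_replicate]

theorem head?_tfBlock_append_T_cons (b : ℕ) (Y : List Cell) :
    (tfBlock b ++ Cell.T :: Y).head? = some Cell.T := by
  cases b <;> simp [tfBlock]

theorem tfGame_F_E_T_equiv_zero {X Y : List Cell} (hX : Cell.E ∉ X) (hY : Cell.E ∉ Y)
    (hT : Y.head? = some Cell.T) : tfGame (X ++ Cell.F :: Cell.E :: Cell.T :: Y) ≈ 0 := by
  obtain ⟨Y, rfl⟩ := List.head?_eq_some_iff.1 hT
  replace hY : Cell.E ∉ Y := List.not_mem_of_not_mem_cons hY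
  clear hT
  have hTTY : Cell.E ∉ Cell.T :: Cell.T :: Y := by simpa using hY
  induction X using List.reverseRecOn generalizing Y with
  | nil =>
    refine tfGame_equiv_zero ?_ (by simp [toadMoves_F_E hTTY])
    simpa using frogMoves_E_T_T (X := [Cell.F]) (by simp) hY
  | append_singleton X d ih =>
    have hX' : Cell.E ∉ X := fun h => hX (List.mem_append_left _ h)
    have hf := frogMoves_E_T_T (X := X ++ [d, Cell.F]) (by simpa using hX) hY
    simp only [List.append_assoc, List.cons_append, List.nil_append] at hf ⊢
    refine tfGame_equiv_zero hf ?_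
    cases d with
    | E => simp at hX
    | F => simp [toadMoves_F_F_E hX' hTTY]
    | T =>
      -- Right answers the jump by sliding the frog back, reaching a position of the same shape.
      rw [toadMoves_jump hX' hTTY]
      simp only [List.mem_singleton, forall_eq]
      refine tfGame_lf_of_mem_frogMoves ?_ (ih hX' (Cell.T :: Y) (by simpa using hY)
        (by simpa using hTTY)).1
      simp [frogMoves_slide hX' (Y := Cell.T :: Cell.T :: Cell.T :: Y) (by simpa using hY)]

theorem tfGame_T_pow_E_T_equiv_natGame {L Y : List Cell} (hLE : Cell.E ∉ L) (hYE : Cell.E ∉ Y)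
    (hL : L = [] ∨ L.getLast? = some Cell.F) (hT : Y.head? = some Cell.T) (n : ℕ) :
    tfGame (L ++ List.replicate n Cell.T ++ Cell.E :: Cell.T :: Y) ≈ natGame n := by
  obtain ⟨Y, rfl⟩ := List.head?_eq_some_iff.1 hT
  replace hYE : Cell.E ∉ Y := List.not_mem_of_not_mem_cons hYE
  clear hT
  have hLn : ∀ n, Cell.E ∉ L ++ List.replicate n Cell.T := by simp [hLE, List.mem_replicate]
  induction n generalizing Y with
  | zero =>
    rcases hL with rfl | hL
    · exact tfGame_equiv_zero (frogMoves_E_T_T (X := []) (by simp) hYE)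
        (by simp [toadMoves_E_cons (Y := Cell.T :: Cell.T :: Y) (by simpa using hYE)])
    · obtain ⟨L, rfl⟩ := List.getLast?_eq_some_iff.1 hL
      simp only [List.replicate_zero, List.append_nil, List.append_assoc, List.cons_append,
        List.nil_append]
      exact tfGame_F_E_T_equiv_zero (fun h => hLE (List.mem_append_left _ h))
        (Y := Cell.T :: Y) (by simpa using hYE) rfl
  | succ n ih =>
    have ht := toadMoves_slide (hLn n) (Y := Cell.T :: Cell.T :: Y) (by simpa using hYE)
    have hf := frogMoves_E_T_T (hLn (n + 1)) hYE
    rw [List.replicate_succ', ← List.append_assoc, List.append_assoc _ [Cell.T],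
      List.singleton_append] at hf ⊢
    exact tfGame_equiv_natGame_succ ht hf (ih (Cell.T :: Y) (by simpa using hYE))

theorem tfGame_T_E_tfBlock_equiv (b : ℕ) {X Z : List Cell} (hX : Cell.E ∉ X) (hZ : Cell.E ∉ Z)
    {G : PGame}
    (hG : tfGame (X ++ Cell.E :: Cell.T :: (tfBlock b ++ Cell.T :: Cell.F :: Z)) ≈ G) :
    tfGame (X ++ Cell.T :: Cell.E :: (tfBlock b ++ Cell.T :: Cell.F :: Z)) ≈
      gmk G ((fun x => gmk 0 x)^[b]
        (tfGame (X ++ Cell.T :: Cell.F :: (tfBlock b ++ Cell.T :: Cell.E :: Z)))) := by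
  have hblock : ∀ b, Cell.E ∉ tfBlock b ++ Cell.T :: Cell.F :: Z := fun b => by
    simp [E_not_mem_tfBlock, hZ]
  induction b generalizing X G with
  | zero =>
    have ht := toadMoves_slide hX (hblock 0)
    have hXT : Cell.E ∉ X ++ [Cell.T] := by simpa using hX
    have hf := frogMoves_jump hXT hZ
    simp only [List.append_assoc, List.singleton_append] at hf
    exact tfGame_equiv_gmk ht hf hG (PGame.equiv_refl _)
  | succ v ih =>
    have ht := toadMoves_slide hX (hblock (v + 1))
    have hXT : Cell.E ∉ X ++ [Cell.T] := by simpa using hX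
    have hf := frogMoves_jump hXT (hblock v)
    simp only [List.append_assoc, List.singleton_append] at hf
    have hXTF : Cell.E ∉ X ++ [Cell.T, Cell.F] := by simpa using hX
    have hv := ih hXTF (G := 0)
      (by simpa using tfGame_F_E_T_equiv_zero hXT (hblock v) (head?_tfBlock_append_T_cons v _))
    simp only [List.append_assoc, List.cons_append, List.nil_append] at hv
    rw [Function.iterate_succ_apply']
    simp only [tfBlock_succ, List.cons_append] at ht hG ⊢
    exact tfGame_equiv_gmk ht hf hG hv

theorem LTabox_TFb_T_Fc_R_general (a b c : ℕ) (ha : 1 ≤ a) (hc : 2 ≤ c)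
    (L R : List Cell) (hLE : Cell.E ∉ L) (hRE : Cell.E ∉ R)
    (hL : L = [] ∨ L.getLast? = some Cell.F) :
    tfGame (L ++ List.replicate a Cell.T ++ [Cell.E] ++ tfBlock b ++
        [Cell.T] ++ List.replicate c Cell.F ++ R) ≈
      gmk (intGame ((a : ℤ) - 1))
        ((fun x => gmk 0 x)^[b]
          (tfGame (L ++ List.replicate a Cell.T ++ [Cell.F] ++ tfBlock b ++
            [Cell.T, Cell.E] ++ List.replicate (c - 1) Cell.F ++ R))) := by
  obtain ⟨n, rfl⟩ : ∃ n, a = n + 1 := ⟨a - 1, by omega⟩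
  obtain ⟨k, rfl⟩ : ∃ k, c = k + 1 := ⟨c - 1, by omega⟩
  have hX : Cell.E ∉ L ++ List.replicate n Cell.T := by simp [hLE, List.mem_replicate]
  have hZ : Cell.E ∉ List.replicate k Cell.F ++ R := by simp [hRE, List.mem_replicate]
  have hG := tfGame_T_pow_E_T_equiv_natGame hLE
    (Y := tfBlock b ++ Cell.T :: Cell.F :: (List.replicate k Cell.F ++ R))
    (by simp [E_not_mem_tfBlock, hZ]) hL (head?_tfBlock_append_T_cons b _) n
  have h := tfGame_T_E_tfBlock_equiv b hX hZ hG
  rw [show ((n + 1 : ℕ) : ℤ) - 1 = n by omega]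
  simp only [List.replicate_succ' (n := n), List.replicate_succ (n := k), List.append_assoc,
    List.cons_append, List.nil_append, Nat.add_sub_cancel] at h ⊢
  exact h

/-- `L T^a □ (TF)^b T F^c R = { a-1 | O^b( L T^a F (TF)^b T □ F^(c-1) R ) }`
for `a ≥ 1`, `b ≥ 0`, `c ≥ 2`, where `O(x) = {0 | x}`, `L` is a `{T,F}`-string
ending in `F` (possibly empty) and `R` a `{T,F}`-string starting with `T`
(possibly empty). -/
theorem LTabox_TFb_T_Fc_R (a b c : ℕ) (ha : 1 ≤ a) (hc : 2 ≤ c)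
    (L R : List Cell) (hLE : Cell.E ∉ L) (hRE : Cell.E ∉ R)
    (hL : L = [] ∨ L.getLast? = some Cell.F)
    (hR : R = [] ∨ R.head? = some Cell.T) :
    tfGame (L ++ List.replicate a Cell.T ++ [Cell.E] ++ tfBlock b ++
        [Cell.T] ++ List.replicate c Cell.F ++ R) ≈
      gmk (intGame ((a : ℤ) - 1))
        ((fun x => gmk 0 x)^[b]
          (tfGame (L ++ List.replicate a Cell.T ++ [Cell.F] ++ tfBlock b ++
            [Cell.T, Cell.E] ++ List.replicate (c - 1) Cell.F ++ R))) :=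
  LTabox_TFb_T_Fc_R_general a b c ha hc L R hLE hRE hL
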